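/- arXiv:1803.06001 — 6 statements merged into one kernel-verified Lean document; each statement's English description precedes it below -/
import Mathlib

section
/- Desnanot–Jacobi identity: for any (n+2)×(n+2) matrix M over a commutative ring, det(M) · det(M with first and last rows and columns removed) = det(M with last row and last column removed) · det(M with first row and first column removed) − det(M with last row and first column removed) · det(M with first row and last column removed). -/
/-!
Multiplying `M` on the right by the matrix whose first two columns are those of `adj M` and whose
other columns are those of the identity makes `M` block upper triangular with diagonal blocks
`det M • 1` and the central minor; comparing determinants gives Jacobi's identity
`det (2 × 2 corner block of adj M) = det M * det (central minor)` for generic `M`, hence for all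
`M`. The four entries of that corner block of `adj M` are, up to a common sign, the four
minors of size `n + 1`.
-/

open Matrix

namespace Matrix

section Jacobi

variable {κ ι R : Type*} [Fintype κ] [Fintype ι] [DecidableEq κ] [DecidableEq ι] [CommRing R]

theorem mul_fromBlocks_adjugate_toBlocks (M : Matrix (κ ⊕ ι) (κ ⊕ ι) R) :
    M * fromBlocks M.adjugate.toBlocks₁₁ 0 M.adjugate.toBlocks₂₁ 1 =
      fromBlocks (M.det • 1) M.toBlocks₁₂ 0 M.toBlocks₂₂ := by
  set A := M.adjugate
  have hMA : fromBlocks M.toBlocks₁₁ M.toBlocks₁₂ M.toBlocks₂₁ M.toBlocks₂₂ *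
      fromBlocks A.toBlocks₁₁ A.toBlocks₁₂ A.toBlocks₂₁ A.toBlocks₂₂ =
      fromBlocks (M.det • 1) 0 0 (M.det • 1) := by
    rw [fromBlocks_toBlocks, fromBlocks_toBlocks, mul_adjugate, ← fromBlocks_one, fromBlocks_smul,
      smul_zero, smul_zero]
  rw [fromBlocks_multiply, fromBlocks_inj] at hMA
  rw [← fromBlocks_toBlocks M, fromBlocks_multiply]
  simp [hMA.1, hMA.2.2.1, fromBlocks_toBlocks]

theorem det_mul_det_adjugate_toBlocks₁₁ (M : Matrix (κ ⊕ ι) (κ ⊕ ι) R) :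
    M.det * M.adjugate.toBlocks₁₁.det = M.det ^ Fintype.card κ * M.toBlocks₂₂.det := by
  have h := congrArg det (mul_fromBlocks_adjugate_toBlocks M)
  rwa [det_mul, det_fromBlocks_zero₁₂, det_fromBlocks_zero₂₁, det_one, mul_one, det_smul,
    det_one, mul_one] at h

theorem det_adjugate_toBlocks₁₁ [Nonempty κ] (M : Matrix (κ ⊕ ι) (κ ⊕ ι) R) :
    M.adjugate.toBlocks₁₁.det = M.det ^ (Fintype.card κ - 1) * M.toBlocks₂₂.det := by
  let X := mvPolynomialX (κ ⊕ ι) (κ ⊕ ι) ℤ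
  suffices X.adjugate.toBlocks₁₁.det = X.det ^ (Fintype.card κ - 1) * X.toBlocks₂₂.det by
    have h := congrArg (MvPolynomial.aeval fun p : (κ ⊕ ι) × (κ ⊕ ι) ↦ M p.1 p.2) this
    simp only [map_mul, map_pow, AlgHom.map_det] at h
    rw [← mvPolynomialX_mapMatrix_aeval ℤ M, ← AlgHom.map_adjugate]
    exact h
  apply mul_left_cancel₀ (det_mvPolynomialX_ne_zero (κ ⊕ ι) ℤ)
  rw [det_mul_det_adjugate_toBlocks₁₁, ← mul_assoc, ← pow_succ',
    Nat.sub_add_cancel Fintype.card_pos]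

end Jacobi

end Matrix

namespace Fin

noncomputable def boundarySumInteriorEquiv (n : ℕ) : Fin 2 ⊕ Fin n ≃ Fin (n + 2) :=
  Equiv.ofBijective (Sum.elim ![0, last (n + 1)] fun k ↦ k.succ.castSucc) <| by
    refine (Fintype.bijective_iff_injective_and_card _).2 ⟨?_, by simp [add_comm]⟩
    refine Function.Injective.sumElim ?_ ?_ ?_
    · intro i j h
      fin_cases i <;> fin_cases j <;> simp_all [Fin.ext_iff]
    · exact (castSucc_injective _).comp (succ_injective _)
    · intro i k h
      fin_cases i <;> simp [Fin.ext_iff] at h; omega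

end Fin

theorem Matrix.adjugate_corners_cross_eq {R : Type*} [CommRing R] {n : ℕ}
    (M : Matrix (Fin (n + 2)) (Fin (n + 2)) R) :
    M.adjugate 0 0 * M.adjugate (Fin.last _) (Fin.last _) -
        M.adjugate 0 (Fin.last _) * M.adjugate (Fin.last _) 0 =
      (M.submatrix Fin.castSucc Fin.castSucc).det * (M.submatrix Fin.succ Fin.succ).det -
        (M.submatrix Fin.castSucc Fin.succ).det * (M.submatrix Fin.succ Fin.castSucc).det := by
  have hsign : (-1 : R) ^ (n + 1 + (n + 1)) = 1 := Even.neg_one_pow ⟨n + 1, rfl⟩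
  simp only [adjugate_fin_succ_eq_det_submatrix, Fin.val_zero, Fin.val_last, Fin.succAbove_zero,
    Fin.succAbove_last, add_zero, zero_add]
  linear_combination
    ((M.submatrix Fin.castSucc Fin.castSucc).det * (M.submatrix Fin.succ Fin.succ).det -
      (M.submatrix Fin.castSucc Fin.succ).det * (M.submatrix Fin.succ Fin.castSucc).det) * hsign

/-- Desnanot–Jacobi identity for an `(n+2) × (n+2)` matrix over a commutative ring. -/
theorem desnanot_jacobi {R : Type*} [CommRing R] (n : ℕ)
    (M : Matrix (Fin (n + 2)) (Fin (n + 2)) R) :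
    M.det *
      (M.submatrix (fun i : Fin n => i.succ.castSucc) (fun j : Fin n => j.succ.castSucc)).det =
    (M.submatrix Fin.castSucc Fin.castSucc).det * (M.submatrix Fin.succ Fin.succ).det -
    (M.submatrix Fin.castSucc Fin.succ).det * (M.submatrix Fin.succ Fin.castSucc).det := by
  set e := Fin.boundarySumInteriorEquiv n
  calc _ = (M.submatrix e e).det ^ (Fintype.card (Fin 2) - 1) *
          (M.submatrix e e).toBlocks₂₂.det := by
        rw [det_submatrix_equiv_self, Fintype.card_fin, Nat.add_one_sub_one, pow_one]; rfl
    _ = (M.submatrix e e).adjugate.toBlocks₁₁.det := (det_adjugate_toBlocks₁₁ _).symm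
    _ = M.adjugate 0 0 * M.adjugate (Fin.last _) (Fin.last _) -
          M.adjugate 0 (Fin.last _) * M.adjugate (Fin.last _) 0 := by
        rw [adjugate_submatrix_equiv_self, det_fin_two]; rfl
    _ = _ := M.adjugate_corners_cross_eq
end

section
/- Suppose an array (d_{i,j}) over a field satisfies the two symplectic 2-frieze local rules: e_{i,j} := d_{i,j} d_{i+1,j+1} − d_{i+1,j} d_{i,j+1} (white entries as 2×2 determinants of black entries), and d_{i,j}² = e_{i-1,j-1} e_{i,j} − e_{i,j-1} e_{i-1,j} for all i,j. If d_{i,j} ≠ 0 for all relevant indices, then every 3×3 minor of adjacent black entries equals its central element: det of the 3×3 matrix (d_{i+r,j+s})_{r,s∈{−1,0,1}} equals d_{i,j}. -/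
/-!
By the Desnanot–Jacobi identity, the minor times its centre `d i j` is the `2 × 2` determinant of
its four corner `2 × 2` minors, which are white entries; the frieze rule says this is `d i j ^ 2`,
and `d i j ≠ 0` can be cancelled.
-/

/-- The Desnanot–Jacobi identity (Dodgson condensation) for a `3 × 3` matrix. -/
theorem Matrix.det_fin_three_mul_center {R : Type*} [CommRing R] (M : Matrix (Fin 3) (Fin 3) R) :
    M.det * M 1 1 =
      (M 0 0 * M 1 1 - M 1 0 * M 0 1) * (M 1 1 * M 2 2 - M 2 1 * M 1 2) -
        (M 1 0 * M 2 1 - M 2 0 * M 1 1) * (M 0 1 * M 1 2 - M 1 1 * M 0 2) := by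
  rw [Matrix.det_fin_three]
  ring

def adjacentMinor {R : Type*} [CommRing R] (d : ℤ → ℤ → R) (i j : ℤ) : R :=
  d i j * d (i + 1) (j + 1) - d (i + 1) j * d i (j + 1)

theorem det_window_mul_center {R : Type*} [CommRing R] (d : ℤ → ℤ → R) (i j : ℤ) :
    (Matrix.of fun r s : Fin 3 => d (i + (r : ℕ) - 1) (j + (s : ℕ) - 1)).det * d i j =
      adjacentMinor d (i - 1) (j - 1) * adjacentMinor d i j -
        adjacentMinor d i (j - 1) * adjacentMinor d (i - 1) j := by
  have shift (k : ℤ) : k + 2 - 1 = k + 1 := by ring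
  simpa [adjacentMinor, shift] using
    Matrix.det_fin_three_mul_center
      (Matrix.of fun r s : Fin 3 => d (i + (r : ℕ) - 1) (j + (s : ℕ) - 1))

/-- In a symplectic 2-frieze (local rules, all entries nonzero), every adjacent
3×3 minor of black entries equals its central element. -/
theorem frieze_three_minor_eq_center {K : Type*} [Field K] (d e : ℤ → ℤ → K)
    (he : ∀ i j : ℤ, e i j = d i j * d (i + 1) (j + 1) - d (i + 1) j * d i (j + 1))
    (hblack : ∀ i j : ℤ,
      (d i j) ^ 2 = e (i - 1) (j - 1) * e i j - e i (j - 1) * e (i - 1) j)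
    (hnz : ∀ i j : ℤ, d i j ≠ 0) :
    ∀ i j : ℤ,
      (Matrix.of fun r s : Fin 3 => d (i + (r : ℕ) - 1) (j + (s : ℕ) - 1)).det = d i j := by
  have e_eq : e = adjacentMinor d := funext₂ he
  intro i j
  refine mul_right_cancel₀ (hnz i j) ?_
  rw [det_window_mul_center, ← e_eq, ← hblack, sq]
end

section
/- Suppose an array (d_{i,j}) over a field satisfies the symplectic 2-frieze local rules with all entries nonzero, and suppose additionally that all adjacent 3×3 minors of black entries equal their central element. Then every adjacent 4×4 minor of black entries, det((d_{i+r,j+s})_{0≤r,s≤3}), equals 1. -/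
/-!
The Desnanot–Jacobi identity expresses a 4×4 minor times its central 2×2 minor through
the four corner 3×3 minors. If every adjacent 3×3 minor equals its central entry, the
right-hand side collapses to the central 2×2 minor `e (i+1) (j+1)` itself, which is
nonzero and can be cancelled.
-/

namespace Matrix

variable {R : Type*} [CommRing R]

/-- The Desnanot–Jacobi identity (Dodgson condensation) for 4×4 matrices. -/
theorem det_fin_four_mul_det_center (A : Matrix (Fin 4) (Fin 4) R) :
    A.det * (A.submatrix (fun k : Fin 2 => k.castSucc.succ) fun k => k.castSucc.succ).det =
      (A.submatrix Fin.castSucc Fin.castSucc).det * (A.submatrix Fin.succ Fin.succ).det -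
        (A.submatrix Fin.castSucc Fin.succ).det * (A.submatrix Fin.succ Fin.castSucc).det := by
  simp only [det_succ_row_zero A, Fin.sum_univ_four, det_fin_three, det_fin_two, submatrix_apply]
  simp only [Nat.succ_eq_add_one, Nat.reduceAdd, Fin.isValue, Fin.coe_ofNat_eq_mod, Nat.zero_mod,
    pow_zero, one_mul, Fin.succ_zero_eq_one, Fin.succAbove, Fin.castSucc_zero, lt_self_iff_false,
    ↓reduceIte, Fin.succ_one_eq_two, Fin.castSucc_one, not_lt_zero, Fin.reduceSucc,
    Fin.reduceCastSucc, Nat.one_mod, pow_one, neg_mul, zero_lt_one, Fin.lt_one_iff, Fin.reduceEq,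
    Nat.reduceMod, even_two, Even.neg_pow, one_pow, Fin.reduceLT, Nat.mod_succ]
  ring

end Matrix

section AdjacentBlock

variable {K : Type*}

def adjacentBlock (d : ℤ → ℤ → K) (n : ℕ) (i j : ℤ) : Matrix (Fin n) (Fin n) K :=
  Matrix.of fun r s => d (i + (r : ℕ)) (j + (s : ℕ))

theorem adjacentBlock_submatrix (d : ℤ → ℤ → K) {m n : ℕ} (i j : ℤ) (a b : ℕ)
    (f g : Fin m → Fin n) (hf : ∀ r, (f r : ℕ) = a + r) (hg : ∀ s, (g s : ℕ) = b + s) :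
    (adjacentBlock d n i j).submatrix f g = adjacentBlock d m (i + a) (j + b) := by
  ext r s
  simp only [adjacentBlock, Matrix.submatrix_apply, Matrix.of_apply, hf, hg]
  push_cast
  ring_nf

variable [CommRing K]

theorem det_adjacentBlock_two (d : ℤ → ℤ → K) (i j : ℤ) :
    (adjacentBlock d 2 i j).det = d i j * d (i + 1) (j + 1) - d (i + 1) j * d i (j + 1) := by
  simp [Matrix.det_fin_two, adjacentBlock, mul_comm]

theorem det_adjacentBlock_four_mul_det_center (d : ℤ → ℤ → K)
    (h3 : ∀ i j : ℤ, (adjacentBlock d 3 i j).det = d (i + 1) (j + 1)) (i j : ℤ) :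
    (adjacentBlock d 4 i j).det * (adjacentBlock d 2 (i + 1) (j + 1)).det =
      (adjacentBlock d 2 (i + 1) (j + 1)).det := by
  have shift0 : ∀ {m : ℕ} (r : Fin m), (r.castSucc : ℕ) = 0 + r := fun _ => (Nat.zero_add _).symm
  have shift1 : ∀ {m : ℕ} (r : Fin m), (r.succ : ℕ) = 1 + r := fun _ => Nat.add_comm _ _
  have jacobi := Matrix.det_fin_four_mul_det_center (adjacentBlock d 4 i j)
  rw [adjacentBlock_submatrix d i j 1 1 _ _ (fun r => shift1 r.castSucc)
      (fun s => shift1 s.castSucc),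
    adjacentBlock_submatrix d i j 0 0 _ _ shift0 shift0,
    adjacentBlock_submatrix d i j 1 1 _ _ shift1 shift1,
    adjacentBlock_submatrix d i j 0 1 _ _ shift0 shift1,
    adjacentBlock_submatrix d i j 1 0 _ _ shift1 shift0] at jacobi
  simp only [Nat.cast_zero, Nat.cast_one, add_zero, h3] at jacobi
  rw [jacobi, det_adjacentBlock_two]
  ring

end AdjacentBlock

theorem frieze_four_minor_eq_one_general {K : Type*} [Field K] (d e : ℤ → ℤ → K)
    (he : ∀ i j : ℤ, e i j = d i j * d (i + 1) (j + 1) - d (i + 1) j * d i (j + 1))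
    (henz : ∀ i j : ℤ, e i j ≠ 0)
    (h3 : ∀ i j : ℤ,
      (Matrix.of fun r s : Fin 3 => d (i + (r : ℕ)) (j + (s : ℕ))).det = d (i + 1) (j + 1)) :
    ∀ i j : ℤ,
      (Matrix.of fun r s : Fin 4 => d (i + (r : ℕ)) (j + (s : ℕ))).det = 1 := by
  intro i j
  have hcenter : (adjacentBlock d 2 (i + 1) (j + 1)).det = e (i + 1) (j + 1) := by
    rw [det_adjacentBlock_two, he]
  have key := det_adjacentBlock_four_mul_det_center d h3 i j
  rw [hcenter] at key
  exact (mul_eq_right₀ (henz _ _)).mp key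

/-- In a symplectic 2-frieze with nonzero entries whose adjacent 3×3 minors equal
their central elements, every adjacent 4×4 minor of black entries equals 1. -/
theorem frieze_four_minor_eq_one {K : Type*} [Field K] (d e : ℤ → ℤ → K)
    (he : ∀ i j : ℤ, e i j = d i j * d (i + 1) (j + 1) - d (i + 1) j * d i (j + 1))
    (hblack : ∀ i j : ℤ,
      (d i j) ^ 2 = e (i - 1) (j - 1) * e i j - e i (j - 1) * e (i - 1) j)
    (hdnz : ∀ i j : ℤ, d i j ≠ 0)
    (henz : ∀ i j : ℤ, e i j ≠ 0)
    (h3 : ∀ i j : ℤ,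
      (Matrix.of fun r s : Fin 3 => d (i + (r : ℕ)) (j + (s : ℕ))).det = d (i + 1) (j + 1)) :
    ∀ i j : ℤ,
      (Matrix.of fun r s : Fin 4 => d (i + (r : ℕ)) (j + (s : ℕ))).det = 1 :=
  frieze_four_minor_eq_one_general d e he henz h3
end

section
/- The 7-periodic sequences a = (…,6,3,1,3,4,2,1,…) and b = (…,3,14,1,2,6,5,1,…) define a 7-super-periodic difference equation: every solution (V_i) of V_i = a_i V_{i−1} − b_i V_{i−2} + a_{i−1} V_{i−3} − V_{i−4} satisfies V_{i+7} = −V_i for all i ∈ ℤ. -/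
/-!
The shift `V ↦ V (· + 7)` preserves solutions because the coefficients are 7-periodic, so
`W i := V (i + 7) + V i` is again a solution. A solution is determined by four consecutive
values, and unrolling the recurrence from `V 0, …, V 3` gives `W 0 = W 1 = W 2 = W 3 = 0`
for these particular coefficients; hence `W = 0`.
-/

namespace FourthOrderRecurrence

variable {R : Type*} [Ring R] (a b : ℤ → R)

def IsSolution (V : ℤ → R) : Prop :=
  ∀ i, V i = a i * V (i - 1) - b i * V (i - 2) + a (i - 1) * V (i - 3) - V (i - 4)

variable {a b} {V W : ℤ → R}

namespace IsSolution

theorem apply_add_four (hV : IsSolution a b V) (i : ℤ) :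
    V (i + 4) = a (i + 4) * V (i + 3) - b (i + 4) * V (i + 2) + a (i + 3) * V (i + 1) - V i := by
  simpa [add_sub_assoc] using hV (i + 4)

theorem add (hV : IsSolution a b V) (hW : IsSolution a b W) : IsSolution a b (V + W) := by
  intro i
  simp only [Pi.add_apply, hV i, hW i]
  noncomm_ring

theorem comp_add_const {p : ℤ} (ha : Function.Periodic a p) (hb : Function.Periodic b p)
    (hV : IsSolution a b V) : IsSolution a b (fun i ↦ V (i + p)) := by
  intro i
  simpa only [add_sub_right_comm, ha i, ha (i - 1), hb i] using hV (i + p)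

theorem eq_zero (hV : IsSolution a b V) (h0 : V 0 = 0) (h1 : V 1 = 0) (h2 : V 2 = 0)
    (h3 : V 3 = 0) : V = 0 := by
  let P : ℤ → Prop := fun n ↦ V n = 0 ∧ V (n + 1) = 0 ∧ V (n + 2) = 0 ∧ V (n + 3) = 0
  have forward (n : ℤ) : P n → P (n + 1) := by
    rintro ⟨e0, e1, e2, e3⟩
    refine ⟨e1, by rwa [add_assoc], by rwa [add_assoc], ?_⟩
    simpa [add_assoc, e0, e1, e2, e3] using hV.apply_add_four n
  have backward (n : ℤ) : P (n + 1) → P n := by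
    rintro ⟨e1, e2, e3, e4⟩
    simp only [add_assoc, Int.reduceAdd] at e2 e3 e4
    refine ⟨?_, e1, e2, e3⟩
    simpa [e1, e2, e3, e4] using hV.apply_add_four n
  have hP : ∀ n, P n := by
    intro n
    induction n using Int.induction_on with
    | zero => simpa [P] using ⟨h0, h1, h2, h3⟩
    | succ n ih => exact forward n ih
    | pred n ih => exact backward _ (by rwa [sub_add_cancel])
  funext n
  exact (hP n).1

end IsSolution

end FourthOrderRecurrence

open FourthOrderRecurrence

/-- The 7-periodic coefficient sequences `a = (6,3,1,3,4,2,1)` and `b = (3,14,1,2,6,5,1)`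
define a 7-super-periodic difference equation: every solution is 7-antiperiodic. -/
theorem example_seven_superperiodic (a b : ℤ → ℚ)
    (ha : ∀ i, a (i + 7) = a i) (hb : ∀ i, b (i + 7) = b i)
    (ha0 : a 0 = 6) (ha1 : a 1 = 3) (ha2 : a 2 = 1) (ha3 : a 3 = 3)
    (ha4 : a 4 = 4) (ha5 : a 5 = 2) (ha6 : a 6 = 1)
    (hb0 : b 0 = 3) (hb1 : b 1 = 14) (hb2 : b 2 = 1) (hb3 : b 3 = 2)
    (hb4 : b 4 = 6) (hb5 : b 5 = 5) (hb6 : b 6 = 1)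
    (V : ℤ → ℚ)
    (hV : ∀ i, V i = a i * V (i - 1) - b i * V (i - 2) + a (i - 1) * V (i - 3) - V (i - 4)) :
    ∀ i, V (i + 7) = -V i := by
  have hV : IsSolution a b V := hV
  have hW : IsSolution a b ((fun i ↦ V (i + 7)) + V) := (hV.comp_add_const ha hb).add hV
  have ha7 : a 7 = 6 := (ha 0).trans ha0
  have ha8 : a 8 = 3 := (ha 1).trans ha1
  have ha9 : a 9 = 1 := (ha 2).trans ha2
  have ha10 : a 10 = 3 := (ha 3).trans ha3
  have hb7 : b 7 = 3 := (hb 0).trans hb0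
  have hb8 : b 8 = 14 := (hb 1).trans hb1
  have hb9 : b 9 = 1 := (hb 2).trans hb2
  have hb10 : b 10 = 2 := (hb 3).trans hb3
  have e4 := hV 4; have e5 := hV 5; have e6 := hV 6; have e7 := hV 7
  have e8 := hV 8; have e9 := hV 9; have e10 := hV 10
  norm_num [ha3, ha4, ha5, ha6, ha7, ha8, ha9, ha10, hb4, hb5, hb6, hb7, hb8, hb9, hb10]
    at e4 e5 e6 e7 e8 e9 e10
  have hW0 := hW.eq_zero (show V 7 + V 0 = 0 by linarith) (show V 8 + V 1 = 0 by linarith)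
    (show V 9 + V 2 = 0 by linarith) (show V 10 + V 3 = 0 by linarith)
  intro i
  simpa [eq_neg_iff_add_eq_zero] using congrFun hW0 i
end

section
/- Continuant recursion for symplectic frieze determinants: defining D_{i,j} as the determinant of the pentadiagonal matrix with rows ( …, 1, a_m, b_{m+1}, a_{m+1}, 1, …) as in the paper (D_{i,i} = a_i, D_{i,i−1} := 1, D_{i,i−2} := 0, D_{i,i−3} := 0), one has D_{i,j} = a_j D_{i,j−1} − b_j D_{i,j−2} + a_{j−1} D_{i,j−3} − D_{i,j−4} for all j ≥ i. -/
/-!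
Expanding the determinant of a matrix with unit subdiagonal and zeros below it along its last
column gives `D (n + 1) = ∑ l ≤ n, (-1) ^ l * A (n - l) n * D (n - l)` for its leading principal
minors `D`: deleting row `n - l` and the last column leaves a block triangular matrix whose
blocks are the leading `n - l` rows and columns and a unitriangular matrix. Column `j` of the
pentadiagonal matrix has only the four entries `a j, b j, a (j - 1), 1` on or above the
diagonal, and the conventions `D i (i - 1) = 1`, `D i j = 0` for `j < i - 1` are exactly what
the expansion produces for matrices with fewer than four rows.
-/

/-- The pentadiagonal (continuant-type) matrix of size `k+1` whose row `r` has
diagonal entry `a (i+r)`, superdiagonals `b (i+r+1)`, `a (i+r+1)`, `1`, and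
subdiagonal `1`. -/
def pentaMat {K : Type*} [CommRing K] (a b : ℤ → K) (i : ℤ) (k : ℕ) :
    Matrix (Fin (k + 1)) (Fin (k + 1)) K :=
  Matrix.of fun r s =>
    if (s : ℕ) = (r : ℕ) then a (i + (r : ℕ))
    else if (s : ℕ) = (r : ℕ) + 1 then b (i + (r : ℕ) + 1)
    else if (s : ℕ) = (r : ℕ) + 2 then a (i + (r : ℕ) + 1)
    else if (s : ℕ) = (r : ℕ) + 3 then 1
    else if (r : ℕ) = (s : ℕ) + 1 then 1
    else 0

/-- `D i j` is the pentadiagonal determinant for `j ≥ i`, with the conventions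
`D i (i-1) = 1` and `D i j = 0` for `j < i - 1`. -/
noncomputable def friezeDet {K : Type*} [CommRing K] (a b : ℤ → K) (i j : ℤ) : K :=
  if j < i - 1 then 0
  else if j = i - 1 then 1
  else (pentaMat a b i (j - i).toNat).det

open Finset

theorem Finset.sum_range_eq_sum_range_of_eq_zero {M : Type*} [AddCommMonoid M] {f : ℕ → M}
    {m n : ℕ} (hm : ∀ l, m ≤ l → f l = 0) (hn : ∀ l, n ≤ l → f l = 0) :
    ∑ l ∈ range m, f l = ∑ l ∈ range n, f l := by
  wlog h : m ≤ n generalizing m n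
  · exact (this hn hm (le_of_not_ge h)).symm
  exact sum_subset (range_subset_range.2 h) fun l _ hl => hm l (by simpa using hl)

namespace Matrix

variable {R : Type*}

def leadingMatrix (A : ℕ → ℕ → R) (n : ℕ) : Matrix (Fin n) (Fin n) R :=
  of fun r s => A r s

@[simp]
theorem leadingMatrix_apply (A : ℕ → ℕ → R) (n : ℕ) (r s : Fin n) :
    leadingMatrix A n r s = A r s :=
  rfl

/-- The minor of `leadingMatrix A (n + 1)` obtained by deleting row `r` and the last column. -/
def lastColumnMinor (A : ℕ → ℕ → R) (n r : ℕ) : Matrix (Fin n) (Fin n) R :=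
  of fun p q => A (if (p : ℕ) < r then p else p + 1) q

variable [CommRing R] {A : ℕ → ℕ → R}

/-- Below row `r` the minor is triangular, with the unit subdiagonal of `A` on its diagonal. -/
theorem det_lastColumnMinor (h_sub : ∀ r, A (r + 1) r = 1)
    (h_zero : ∀ r s, s + 1 < r → A r s = 0) {n r : ℕ} (hr : r ≤ n) :
    (lastColumnMinor A n r).det = (leadingMatrix A r).det := by
  induction n, hr using Nat.le_induction with
  | base =>
    congr 1
    ext p q
    simp [lastColumnMinor]
  | succ n hrn ih =>
    have h_last (q : Fin (n + 1)) : lastColumnMinor A (n + 1) r (Fin.last n) q = A (n + 1) q := by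
      simp [lastColumnMinor, hrn.not_gt]
    have h_minor : (lastColumnMinor A (n + 1) r).submatrix Fin.castSucc Fin.castSucc =
        lastColumnMinor A n r := by
      ext p q
      simp [lastColumnMinor]
    rw [det_succ_row _ (Fin.last n), Fintype.sum_eq_single (Fin.last n)]
    · simp [h_last, h_sub, h_minor, ih, ← two_mul]
    · intro q hq
      rw [h_last, h_zero _ _ (by have := Fin.val_lt_last hq; omega)]
      ring

theorem det_leadingMatrix_succ (h_sub : ∀ r, A (r + 1) r = 1)
    (h_zero : ∀ r s, s + 1 < r → A r s = 0) (n : ℕ) :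
    (leadingMatrix A (n + 1)).det =
      ∑ l ∈ range (n + 1), (-1) ^ l * A (n - l) n * (leadingMatrix A (n - l)).det := by
  have h_minor (r : Fin (n + 1)) :
      (leadingMatrix A (n + 1)).submatrix r.succAbove (Fin.last n).succAbove =
        lastColumnMinor A n r := by
    ext p q
    simp [lastColumnMinor, Fin.succAbove, Fin.lt_def, apply_ite Fin.val]
  rw [det_succ_column _ (Fin.last n)]
  simp_rw [h_minor, det_lastColumnMinor h_sub h_zero (Nat.lt_succ_iff.1 (Fin.is_lt _)),
    leadingMatrix_apply, Fin.val_last]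
  rw [Fin.sum_univ_eq_sum_range (fun r => (-1) ^ (r + n) * A r n * (leadingMatrix A r).det),
    ← sum_range_reflect]
  refine sum_congr rfl fun l hl => ?_
  have hl : l ≤ n := Nat.lt_succ_iff.1 (mem_range.1 hl)
  rw [Nat.succ_sub_one, show n - l + n = l + 2 * (n - l) by omega, pow_add, pow_mul]
  simp

end Matrix

section Frieze

variable {K : Type*} [CommRing K] (a b : ℤ → K)

/-- The entry in row `t` and column `u` of the bi-infinite pentadiagonal matrix whose block on
rows and columns `i, …, i + k` is `pentaMat a b i k`. -/
def pentaEntry (t u : ℤ) : K :=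
  if u = t then a t
  else if u = t + 1 then b (t + 1)
  else if u = t + 2 then a (t + 1)
  else if u = t + 3 then 1
  else if t = u + 1 then 1
  else 0

theorem pentaMat_eq_leadingMatrix (i : ℤ) (k : ℕ) :
    pentaMat a b i k =
      Matrix.leadingMatrix (fun r s : ℕ => pentaEntry a b (i + r) (i + s)) (k + 1) := by
  ext r s
  simp only [pentaMat, pentaEntry, Matrix.of_apply, Matrix.leadingMatrix_apply]
  split_ifs <;> first | omega | rfl

theorem pentaEntry_add_one_self (t : ℤ) : pentaEntry a b (t + 1) t = 1 := by
  simp only [pentaEntry]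
  split_ifs <;> first | omega | rfl

theorem pentaEntry_of_add_one_lt {t u : ℤ} (h : u + 1 < t) : pentaEntry a b t u = 0 := by
  simp only [pentaEntry]
  split_ifs <;> first | omega | rfl

theorem pentaEntry_of_add_three_lt {t u : ℤ} (h : t + 3 < u) : pentaEntry a b t u = 0 := by
  simp only [pentaEntry]
  split_ifs <;> first | omega | rfl

@[simp]
theorem pentaEntry_self (t : ℤ) : pentaEntry a b t t = a t := by
  simp [pentaEntry]

@[simp]
theorem pentaEntry_sub_one_self (t : ℤ) : pentaEntry a b (t - 1) t = b t := by
  rw [pentaEntry, if_neg (by omega), if_pos (by omega), sub_add_cancel]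

@[simp]
theorem pentaEntry_sub_two_self (t : ℤ) : pentaEntry a b (t - 2) t = a (t - 1) := by
  rw [pentaEntry, if_neg (by omega), if_neg (by omega), if_pos (by omega)]
  congr 1
  ring

@[simp]
theorem pentaEntry_sub_three_self (t : ℤ) : pentaEntry a b (t - 3) t = 1 := by
  rw [pentaEntry, if_neg (by omega), if_neg (by omega), if_neg (by omega), if_pos (by omega)]

theorem friezeDet_of_lt {i j : ℤ} (h : j < i - 1) : friezeDet a b i j = 0 :=
  if_pos h

theorem friezeDet_add_sub_one (i : ℤ) (n : ℕ) :
    friezeDet a b i (i + n - 1) =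
      (Matrix.leadingMatrix (fun r s : ℕ => pentaEntry a b (i + r) (i + s)) n).det := by
  rcases n with _ | k
  · simp [friezeDet]
  · rw [friezeDet, if_neg (by omega), if_neg (by omega),
      show (i + (k + 1 : ℕ) - 1 - i).toNat = k by omega, pentaMat_eq_leadingMatrix]

theorem friezeDet_eq_sum {i j : ℤ} (hij : i ≤ j) :
    friezeDet a b i j =
      ∑ l ∈ range 4, (-1) ^ l * pentaEntry a b (j - l) j * friezeDet a b i (j - l - 1) := by
  obtain ⟨n, rfl⟩ : ∃ n : ℕ, j = i + n := ⟨(j - i).toNat, by omega⟩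
  have h_expand : friezeDet a b i (i + n) = ∑ l ∈ range (n + 1),
      (-1) ^ l * pentaEntry a b (i + n - l) (i + n) * friezeDet a b i (i + n - l - 1) := by
    have h_det := friezeDet_add_sub_one a b i (n + 1)
    rw [Nat.cast_succ, ← add_assoc, add_sub_cancel_right] at h_det
    rw [h_det, Matrix.det_leadingMatrix_succ
      (fun r => by simpa [add_assoc] using pentaEntry_add_one_self a b (i + r))
      (fun r s h => pentaEntry_of_add_one_lt a b (by omega))]
    refine sum_congr rfl fun l hl => ?_
    have hl : l ≤ n := Nat.lt_succ_iff.1 (mem_range.1 hl)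
    rw [← friezeDet_add_sub_one]
    simp only [Nat.cast_sub hl, add_sub_assoc]
  rw [h_expand]
  apply sum_range_eq_sum_range_of_eq_zero
  · intro l hl
    rw [friezeDet_of_lt a b (by omega), mul_zero]
  · intro l hl
    rw [pentaEntry_of_add_three_lt a b (by omega), mul_zero, zero_mul]

end Frieze

/-- Continuant recursion for the symplectic frieze determinants:
`D i j = a j * D i (j-1) - b j * D i (j-2) + a (j-1) * D i (j-3) - D i (j-4)`. -/
theorem friezeDet_recursion {K : Type*} [CommRing K] (a b : ℤ → K) :
    ∀ i j : ℤ, i ≤ j →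
      friezeDet a b i j =
        a j * friezeDet a b i (j - 1) - b j * friezeDet a b i (j - 2) +
          a (j - 1) * friezeDet a b i (j - 3) - friezeDet a b i (j - 4) := by
  intro i j hij
  rw [friezeDet_eq_sum a b hij]
  norm_num [sum_range_succ, sub_sub]
  ring
end

section
/- The monodromy of the width-1 family: for the 6-periodic coefficients given in terms of parameters (a,b) with a ≠ 0, b ≠ 0 by a₃ = a₆ = a, b₃ = b₆ = b, a₁ = a₄ = (1+b+a²)/(ab), b₁ = b₄ = (1+a²)/b, a₂ = a₅ = (1+b)/a, b₂ = b₅ = ((1+b)²+a²)/(a²b), the product E₁E₂E₃E₄E₅E₆ of the companion matrices E_j = [[0,0,0,−1],[1,0,0,a_{j−1}],[0,1,0,−b_j],[0,0,1,a_j]] equals −Id₄. -/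
/-!
The coefficients are 3-periodic, so the monodromy is the square of the product `M = E₁E₂E₃`.
The width-1 coefficients satisfy six quadratic relations (`a a₂ = 1 + b`, `b b₁ = 1 + a²`, …)
under which `M` collapses to `!![0, -1, -a₂, -1; 0, a, b, 0; 0, -b₁, -a, 0; 1, a₁, 1, 0]`,
and the same relations make the square of this matrix `-1`.
-/

section Companion

variable {R : Type*} [CommRing R]

def companion (p q r : R) : Matrix (Fin 4) (Fin 4) R :=
  !![0, 0, 0, -1; 1, 0, 0, p; 0, 1, 0, -q; 0, 0, 1, r]

theorem companion_mul_companion_mul_companion (a₀ b₁ a₁ b₂ a₂ b₃ : R) :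
    companion a₀ b₁ a₁ * companion a₁ b₂ a₂ * companion a₂ b₃ a₀ =
      !![0, -1, -a₂, b₃ - a₀ * a₂;
        0, a₀, a₀ * a₂ - 1, a₀ * (a₀ * a₂ - 1) - a₀ * b₃;
        0, -b₁, a₁ - a₂ * b₁, b₁ * b₃ + a₀ * (a₁ - a₂ * b₁) - 1;
        1, a₁, a₁ * a₂ - b₂, a₂ - a₁ * b₃ + a₀ * (a₁ * a₂ - b₂)] := by
  ext i j
  fin_cases i <;> fin_cases j <;>
    simp [companion, Matrix.mul_apply, Fin.sum_univ_four] <;> ring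

theorem companion_mul_companion_mul_companion_sq {a₀ b₁ a₁ b₂ a₂ b₃ : R}
    (h₁ : a₀ * a₂ = 1 + b₃) (h₂ : b₁ * b₃ = 1 + a₀ ^ 2) (h₃ : a₁ * b₃ = a₀ + a₂)
    (h₄ : a₁ * a₂ = 1 + b₂) (h₅ : a₂ * b₁ = a₀ + a₁) (h₆ : a₀ * a₁ = 1 + b₁) :
    (companion a₀ b₁ a₁ * companion a₁ b₂ a₂ * companion a₂ b₃ a₀) ^ 2 = -1 := by
  have hM : companion a₀ b₁ a₁ * companion a₁ b₂ a₂ * companion a₂ b₃ a₀ =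
      !![0, -1, -a₂, -1; 0, a₀, b₃, 0; 0, -b₁, -a₀, 0; 1, a₁, 1, 0] := by
    rw [companion_mul_companion_mul_companion]
    ext i j
    fin_cases i <;> fin_cases j <;> simp <;> grind
  rw [hM, sq]
  ext i j
  fin_cases i <;> fin_cases j <;> simp [Matrix.mul_apply, Fin.sum_univ_four] <;> grind

end Companion

/-- Monodromy of the width-1 family: with the 6-periodic coefficients expressed in
terms of parameters `(a,b)` with `a ≠ 0`, `b ≠ 0`, the product `E₁E₂E₃E₄E₅E₆` of the
companion matrices equals `−Id`. -/
theorem width_one_monodromy {K : Type*} [Field K] (a b : K) (ha : a ≠ 0) (hb : b ≠ 0) :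
    let a1 := (1 + b + a ^ 2) / (a * b)
    let a2 := (1 + b) / a
    let b1 := (1 + a ^ 2) / b
    let b2 := ((1 + b) ^ 2 + a ^ 2) / (a ^ 2 * b)
    -- `E p q r` is the companion matrix `E_j` with `p = a_{j-1}`, `q = b_j`, `r = a_j`
    let E : K → K → K → Matrix (Fin 4) (Fin 4) K :=
      fun p q r => !![0, 0, 0, -1; 1, 0, 0, p; 0, 1, 0, -q; 0, 0, 1, r]
    E a b1 a1 * E a1 b2 a2 * E a2 b a * E a b1 a1 * E a1 b2 a2 * E a2 b a = -1 := by
  intro a1 a2 b1 b2 E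
  obtain ⟨h₁, h₂, h₃, h₄, h₅, h₆⟩ :
      a * a2 = 1 + b ∧ b1 * b = 1 + a ^ 2 ∧ a1 * b = a + a2 ∧ a1 * a2 = 1 + b2 ∧
        a2 * b1 = a + a1 ∧ a * a1 = 1 + b1 := by
    simp only [a1, a2, b1, b2]
    refine ⟨?_, ?_, ?_, ?_, ?_, ?_⟩ <;> field_simp <;> ring
  calc E a b1 a1 * E a1 b2 a2 * E a2 b a * E a b1 a1 * E a1 b2 a2 * E a2 b a
      = (companion a b1 a1 * companion a1 b2 a2 * companion a2 b a) ^ 2 := by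
        simp only [sq, Matrix.mul_assoc]; rfl
    _ = -1 := companion_mul_companion_mul_companion_sq h₁ h₂ h₃ h₄ h₅ h₆
end
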